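/- Let θ ∈ (0, π/2), let S ∈ Π_θ^{Ber,P} relative to K, and let T, X, Y be bounded linear operators on H. Then for each choice of sign ±: ber(SXT ± TYS) ≤ 2 sin(θ) · ( ‖T*X*XT + TYY*T*‖_ber )^{1/2} · ( (ber(S))² − (1/(2 sin²θ))·( (ber(Im(S)))² − (ber(Re(S)))² ) )^{1/2}. -/

import Mathlib

open scoped InnerProductSpace
open ContinuousLinearMap
set_option maxHeartbeats 1000000
set_option linter.unusedSectionVars false
set_option linter.unusedTactic false
set_option linter.deprecated false

noncomputable section

variable {H : Type*} [NormedAddCommGroup H] [InnerProductSpace ℂ H] [CompleteSpace H]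

/-- The Berezin number of `A` relative to a set `K` of unit vectors:
`ber(A) = sup_{x ∈ K} |⟨A x, x⟩|` (with the paper's inner product `⟨A x, x⟩ = ⟪x, A x⟫_ℂ`). -/
def berNum (K : Set H) (A : H →L[ℂ] H) : ℝ :=
  ⨆ x : K, ‖⟪(x : H), A x⟫_ℂ‖

/-- The Berezin norm of `A` relative to `K`: `‖A‖_ber = sup_{x, y ∈ K} |⟨A x, y⟩|`. -/
def berNorm (K : Set H) (A : H →L[ℂ] H) : ℝ :=
  ⨆ x : K, ⨆ y : K, ‖⟪(y : H), A (x : H)⟫_ℂ‖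

/-- The real part `Re(A) = (A + A*)/2` of an operator. -/
def reOp (A : H →L[ℂ] H) : H →L[ℂ] H := (2 : ℂ)⁻¹ • (A + adjoint A)

/-- The imaginary part `Im(A) = (A - A*)/(2i)` of an operator. -/
def imOp (A : H →L[ℂ] H) : H →L[ℂ] H := (2 * Complex.I)⁻¹ • (A - adjoint A)

/-- `A` is Berezin sectorial with semi-angle `θ` relative to `K`:
every Berezin symbol value `⟨A x, x⟩`, `x ∈ K`, lies in the sector `S_θ`. -/
def BerSectorial (K : Set H) (θ : ℝ) (A : H →L[ℂ] H) : Prop :=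
  ∀ x ∈ K, 0 ≤ (⟪x, A x⟫_ℂ).re ∧ |(⟪x, A x⟫_ℂ).im| ≤ Real.tan θ * (⟪x, A x⟫_ℂ).re

/-- `A ∈ Π_θ^{Ber,P}`: Berezin sectorial and both `Re(A)` and `Im(A)` satisfy
the Berezin number power inequality. -/
def BerSectorialP (K : Set H) (θ : ℝ) (A : H →L[ℂ] H) : Prop :=
  BerSectorial K θ A ∧
    ∀ n : ℕ, 0 < n →
      berNum K (reOp A ^ n) ≤ berNum K (reOp A) ^ n ∧
      berNum K (imOp A ^ n) ≤ berNum K (imOp A) ^ n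

-- auxiliary lemmas

lemma aux_abs_le (K : Set H) (hKunit : ∀ x ∈ K, ‖x‖ = 1) (A : H →L[ℂ] H)
    (x y : K) : ‖⟪(y : H), A x⟫_ℂ‖ ≤ ‖A‖ := by
  have h1 : ‖⟪(y : H), A x⟫_ℂ‖ ≤ ‖(y : H)‖ * ‖A (x : H)‖ := norm_inner_le_norm _ _
  have h2 : ‖A (x : H)‖ ≤ ‖A‖ * ‖(x : H)‖ := A.le_opNorm _
  rw [hKunit x x.2] at h2
  rw [hKunit y y.2] at h1
  nlinarith [norm_nonneg (A (x : H)), norm_nonneg A]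

lemma aux_bdd (K : Set H) (hKunit : ∀ x ∈ K, ‖x‖ = 1) (A : H →L[ℂ] H) :
    BddAbove (Set.range fun x : K => ‖⟪(x : H), A x⟫_ℂ‖) := by
  refine ⟨‖A‖, ?_⟩
  rintro _ ⟨x, rfl⟩
  exact aux_abs_le K hKunit A x x

lemma le_berNum (K : Set H) (hKunit : ∀ x ∈ K, ‖x‖ = 1) (A : H →L[ℂ] H) (x : K) :
    ‖⟪(x : H), A x⟫_ℂ‖ ≤ berNum K A :=
  le_ciSup (aux_bdd K hKunit A) x

lemma le_berNorm (K : Set H) (hKunit : ∀ x ∈ K, ‖x‖ = 1) (A : H →L[ℂ] H) (x : K) :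
    ‖⟪(x : H), A x⟫_ℂ‖ ≤ berNorm K A := by
  have h1 : ‖⟪(x : H), A x⟫_ℂ‖ ≤ ⨆ y : K, ‖⟪(y : H), A (x : H)⟫_ℂ‖ := by
    refine le_ciSup (f := fun y : K => ‖⟪(y : H), A (x : H)⟫_ℂ‖) ?_ x
    exact ⟨‖A‖, by rintro _ ⟨y, rfl⟩; exact aux_abs_le K hKunit A x y⟩
  refine h1.trans ?_
  refine le_ciSup (f := fun x : K => ⨆ y : K, ‖⟪(y : H), A (x : H)⟫_ℂ‖) ?_ x
  refine ⟨‖A‖, ?_⟩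
  rintro _ ⟨z, rfl⟩
  have : Nonempty K := ⟨x⟩
  exact ciSup_le fun y => aux_abs_le K hKunit A z y

lemma reOp_selfAdjoint (A : H →L[ℂ] H) : adjoint (reOp A) = reOp A := by
  rw [reOp, ← star_eq_adjoint, ← star_eq_adjoint, star_smul, star_add, star_star,
    star_eq_adjoint]
  simp [add_comm]

lemma imOp_selfAdjoint (A : H →L[ℂ] H) : adjoint (imOp A) = imOp A := by
  rw [imOp, ← star_eq_adjoint, ← star_eq_adjoint, star_smul, star_sub, star_star,
    star_eq_adjoint]
  have h : star ((2 * Complex.I)⁻¹) = -(2 * Complex.I)⁻¹ := by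
    simp [Complex.ext_iff]
  rw [h, neg_smul, ← smul_neg, neg_sub]

-- Berezin symbol of imOp
lemma inner_imOp (A : H →L[ℂ] H) (x : H) :
    ⟪x, imOp A x⟫_ℂ = ((⟪x, A x⟫_ℂ).im : ℂ) := by
  have h1 : ⟪x, adjoint A x⟫_ℂ = starRingEnd ℂ ⟪x, A x⟫_ℂ := by
    rw [adjoint_inner_right, inner_conj_symm]
  rw [imOp]
  simp only [smul_apply, sub_apply, inner_smul_right, inner_sub_right, h1]
  rw [Complex.sub_conj]
  have h2 : (2 * Complex.I) ≠ 0 := by simp [Complex.I_ne_zero]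
  field_simp
  push_cast
  ring

lemma inner_reOp (A : H →L[ℂ] H) (x : H) :
    ⟪x, reOp A x⟫_ℂ = ((⟪x, A x⟫_ℂ).re : ℂ) := by
  have h1 : ⟪x, adjoint A x⟫_ℂ = starRingEnd ℂ ⟪x, A x⟫_ℂ := by
    rw [adjoint_inner_right, inner_conj_symm]
  rw [reOp]
  simp only [smul_apply, add_apply, inner_smul_right, inner_add_right, h1]
  rw [Complex.add_conj]
  push_cast
  ring

/-- If `S ∈ Π_θ^{Ber,P}` with `θ ∈ (0, π/2)` and `T, X, Y` are bounded
operators, then for each sign `ε = ±1`,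
`ber(SXT ± TYS) ≤ 2 sin θ · ‖T*|X|²T + T|Y*|²T*‖_ber^{1/2}
  · (ber(S)² − (1/(2 sin²θ))(ber(Im S)² − ber(Re S)²))^{1/2}`. -/
theorem berezin_sectorialP_generalized_commutator_bound
    (K : Set H) (hK : K.Nonempty) (hKunit : ∀ x ∈ K, ‖x‖ = 1)
    (θ : ℝ) (hθ : θ ∈ Set.Ioo 0 (Real.pi / 2))
    (S T X Y : H →L[ℂ] H) (hS : BerSectorialP K θ S)
    (ε : ℝ) (hε : ε = 1 ∨ ε = -1) :
    berNum K (S * X * T + (ε : ℂ) • (T * Y * S)) ≤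
      2 * Real.sin θ *
        Real.sqrt (berNorm K
          (adjoint T * (adjoint X * X) * T + T * (Y * adjoint Y) * adjoint T)) *
        Real.sqrt ((berNum K S) ^ 2 - (2 * Real.sin θ ^ 2)⁻¹ *
          ((berNum K (imOp S)) ^ 2 - (berNum K (reOp S)) ^ 2)) := by
  have : Nonempty K := hK.to_subtype
  obtain ⟨hθ0, hθ1⟩ := hθ
  have hsin : 0 < Real.sin θ := Real.sin_pos_of_pos_of_lt_pi hθ0 (by linarith [Real.pi_pos])
  have hcos : 0 < Real.cos θ := Real.cos_pos_of_mem_Ioo ⟨by linarith, hθ1⟩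
  set Bn := berNum K S with hBn
  set Rn := berNum K (reOp S) with hRn
  set In := berNum K (imOp S) with hIn
  set β := berNorm K (adjoint T * (adjoint X * X) * T + T * (Y * adjoint Y) * adjoint T) with hβ
  set γ := Bn ^ 2 - (2 * Real.sin θ ^ 2)⁻¹ * (In ^ 2 - Rn ^ 2) with hγ
  have hBn0 : 0 ≤ Bn := Real.iSup_nonneg fun x => norm_nonneg _
  have hRn0 : 0 ≤ Rn := Real.iSup_nonneg fun x => norm_nonneg _
  have hIn0 : 0 ≤ In := Real.iSup_nonneg fun x => norm_nonneg _
  -- key: In ≤ sin θ * Bn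
  have hkey : In ≤ Real.sin θ * Bn := by
    rw [hIn, berNum]
    refine ciSup_le fun x => ?_
    rw [inner_imOp, Complex.norm_real, Real.norm_eq_abs]
    obtain ⟨hre, him⟩ := hS.1 x x.2
    set z := ⟪(x : H), S x⟫_ℂ with hz
    have habs : ‖z‖ = Real.sqrt (z.re ^ 2 + z.im ^ 2) := by
      rw [Complex.norm_def, Complex.normSq_apply]; ring_nf
    have htan : Real.tan θ = Real.sin θ / Real.cos θ := Real.tan_eq_sin_div_cos θ
    have h1 : |z.im| ≤ Real.sin θ * ‖z‖ := by
      rw [habs]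
      have h2 : Real.cos θ * |z.im| ≤ Real.sin θ * z.re := by
        rw [htan] at him
        calc Real.cos θ * |z.im| ≤ Real.cos θ * (Real.sin θ / Real.cos θ * z.re) := by
              exact mul_le_mul_of_nonneg_left him hcos.le
          _ = Real.sin θ * z.re := by field_simp
      have h3 : |z.im| ^ 2 ≤ Real.sin θ ^ 2 * (z.re ^ 2 + z.im ^ 2) := by
        have hpy : Real.sin θ ^ 2 + Real.cos θ ^ 2 = 1 := Real.sin_sq_add_cos_sq θ
        have h2' := mul_self_le_mul_self (by positivity : (0:ℝ) ≤ Real.cos θ * |z.im|) h2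
        nlinarith [abs_nonneg z.im, sq_abs z.im, h2']
      have h4 : Real.sqrt (|z.im| ^ 2) ≤ Real.sqrt (Real.sin θ ^ 2 * (z.re ^ 2 + z.im ^ 2)) :=
        Real.sqrt_le_sqrt h3
      rwa [Real.sqrt_sq (abs_nonneg _), Real.sqrt_mul (sq_nonneg _),
        Real.sqrt_sq hsin.le] at h4
    refine h1.trans ?_
    exact mul_le_mul_of_nonneg_left (le_berNum K hKunit S x) hsin.le
  -- pointwise bound on b_x
  have hb : ∀ x : K, ‖S (x : H)‖ ^ 2 + ‖adjoint S (x : H)‖ ^ 2 ≤ 4 * Real.sin θ ^ 2 * γ := by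
    intro x
    -- parallelogram
    have hR : ‖reOp S (x : H)‖ ^ 2 ≤ Rn ^ 2 := by
      have e1 : ⟪(x : H), (reOp S ^ 2) x⟫_ℂ = (‖reOp S (x : H)‖ : ℂ) ^ 2 := by
        rw [pow_two, mul_apply_eq_comp, ← adjoint_inner_left, reOp_selfAdjoint,
          inner_self_eq_norm_sq_to_K]
        norm_cast
      have e2 : ‖⟪(x : H), (reOp S ^ 2) x⟫_ℂ‖ = ‖reOp S (x : H)‖ ^ 2 := by
        rw [e1, ← Complex.ofReal_pow, Complex.norm_real, Real.norm_eq_abs, abs_of_nonneg (by positivity)]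
      calc ‖reOp S (x : H)‖ ^ 2 = ‖⟪(x : H), (reOp S ^ 2) x⟫_ℂ‖ := e2.symm
        _ ≤ berNum K (reOp S ^ 2) := le_berNum K hKunit _ x
        _ ≤ Rn ^ 2 := (hS.2 2 (by norm_num)).1
    have hI : ‖imOp S (x : H)‖ ^ 2 ≤ In ^ 2 := by
      have e1 : ⟪(x : H), (imOp S ^ 2) x⟫_ℂ = (‖imOp S (x : H)‖ : ℂ) ^ 2 := by
        rw [pow_two, mul_apply_eq_comp, ← adjoint_inner_left, imOp_selfAdjoint,
          inner_self_eq_norm_sq_to_K]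
        norm_cast
      have e2 : ‖⟪(x : H), (imOp S ^ 2) x⟫_ℂ‖ = ‖imOp S (x : H)‖ ^ 2 := by
        rw [e1, ← Complex.ofReal_pow, Complex.norm_real, Real.norm_eq_abs, abs_of_nonneg (by positivity)]
      calc ‖imOp S (x : H)‖ ^ 2 = ‖⟪(x : H), (imOp S ^ 2) x⟫_ℂ‖ := e2.symm
        _ ≤ berNum K (imOp S ^ 2) := le_berNum K hKunit _ x
        _ ≤ In ^ 2 := (hS.2 2 (by norm_num)).2
    -- ‖Sx‖² + ‖S*x‖² = 2(‖Rx‖² + ‖Ix‖²)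
    have hpar : ‖S (x : H)‖ ^ 2 + ‖adjoint S (x : H)‖ ^ 2
        = 2 * (‖reOp S (x : H)‖ ^ 2 + ‖imOp S (x : H)‖ ^ 2) := by
      have hre : ‖reOp S (x : H)‖ = 2⁻¹ * ‖S (x : H) + adjoint S (x : H)‖ := by
        rw [reOp]
        simp only [smul_apply, add_apply, norm_smul]
        norm_num
      have him : ‖imOp S (x : H)‖ = 2⁻¹ * ‖S (x : H) - adjoint S (x : H)‖ := by
        rw [imOp]
        simp only [smul_apply, sub_apply, norm_smul]
        simp [Complex.norm_def, Complex.normSq_apply]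
      have hpl := parallelogram_law_with_norm ℂ (S (x : H)) (adjoint S (x : H))
      rw [hre, him]
      ring_nf
      ring_nf at hpl
      linarith
    rw [hpar]
    have hrw : 4 * Real.sin θ ^ 2 * γ = 4 * Real.sin θ ^ 2 * Bn ^ 2 - 2 * In ^ 2 + 2 * Rn ^ 2 := by
      rw [hγ]
      have : Real.sin θ ^ 2 ≠ 0 := by positivity
      field_simp
      ring
    rw [hrw]
    nlinarith [hkey, hsin.le, mul_le_mul hkey hkey hIn0 (by positivity : (0:ℝ) ≤ Real.sin θ * Bn)]
  have hγ0 : 0 ≤ γ := by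
    have := hb ⟨hK.choose, hK.choose_spec⟩
    nlinarith [this, sq_nonneg ‖S (hK.choose : H)‖, sq_nonneg ‖adjoint S (hK.choose : H)‖,
      mul_pos hsin hsin]
  have hβ0 : 0 ≤ β := Real.iSup_nonneg fun x => Real.iSup_nonneg fun y => norm_nonneg _
  -- main pointwise estimate
  rw [berNum]
  refine ciSup_le fun x => ?_
  set u := X (T (x : H)) with hu
  set v := adjoint Y (adjoint T (x : H)) with hv
  have hval : ⟪(x : H), (S * X * T + (ε : ℂ) • (T * Y * S)) x⟫_ℂ
      = ⟪adjoint S (x : H), u⟫_ℂ + (ε : ℂ) * ⟪v, S (x : H)⟫_ℂ := by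
    simp only [add_apply, smul_apply, mul_apply_eq_comp, inner_add_right, inner_smul_right]
    rw [adjoint_inner_left, hu, hv, adjoint_inner_left, adjoint_inner_left]
  have habs1 : ‖⟪(x : H), (S * X * T + (ε : ℂ) • (T * Y * S)) x⟫_ℂ‖
      ≤ ‖adjoint S (x : H)‖ * ‖u‖ + ‖v‖ * ‖S (x : H)‖ := by
    rw [hval]
    refine (norm_add_le _ _).trans ?_
    have hεabs : ‖(ε : ℂ)‖ = 1 := by
      rcases hε with h | h <;> simp [h]
    rw [norm_mul, hεabs, one_mul]
    gcongr
    · exact (norm_inner_le_norm _ _)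
    · exact (norm_inner_le_norm _ _)
  -- a_x ≤ β
  have ha : ‖u‖ ^ 2 + ‖v‖ ^ 2 ≤ β := by
    have e1 : ⟪(x : H), (adjoint T * (adjoint X * X) * T + T * (Y * adjoint Y) * adjoint T) x⟫_ℂ
        = ((‖u‖ : ℂ)) ^ 2 + ((‖v‖ : ℂ)) ^ 2 := by
      simp only [add_apply, mul_apply_eq_comp, inner_add_right]
      rw [adjoint_inner_right T, adjoint_inner_right X, ← adjoint_inner_left T,
        ← adjoint_inner_left Y, ← hu, ← hv, inner_self_eq_norm_sq_to_K,
        inner_self_eq_norm_sq_to_K]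
      norm_cast
    have e2 : ‖⟪(x : H),
        (adjoint T * (adjoint X * X) * T + T * (Y * adjoint Y) * adjoint T) x⟫_ℂ‖
        = ‖u‖ ^ 2 + ‖v‖ ^ 2 := by
      rw [e1, ← Complex.ofReal_pow, ← Complex.ofReal_pow, ← Complex.ofReal_add,
        Complex.norm_real, Real.norm_eq_abs, abs_of_nonneg (by positivity)]
    calc ‖u‖ ^ 2 + ‖v‖ ^ 2 = _ := e2.symm
      _ ≤ β := le_berNorm K hKunit _ x
  -- Cauchy-Schwarz in ℝ²
  have hcs : ‖adjoint S (x : H)‖ * ‖u‖ + ‖v‖ * ‖S (x : H)‖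
      ≤ Real.sqrt (‖u‖ ^ 2 + ‖v‖ ^ 2) * Real.sqrt (‖S (x : H)‖ ^ 2 + ‖adjoint S (x : H)‖ ^ 2) := by
    set p := Real.sqrt (‖u‖ ^ 2 + ‖v‖ ^ 2) with hp
    set q := Real.sqrt (‖S (x : H)‖ ^ 2 + ‖adjoint S (x : H)‖ ^ 2) with hq
    have hp2 : p ^ 2 = ‖u‖ ^ 2 + ‖v‖ ^ 2 := Real.sq_sqrt (by positivity)
    have hq2 : q ^ 2 = ‖S (x : H)‖ ^ 2 + ‖adjoint S (x : H)‖ ^ 2 := Real.sq_sqrt (by positivity)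
    have hL0 : 0 ≤ ‖adjoint S (x : H)‖ * ‖u‖ + ‖v‖ * ‖S (x : H)‖ := by positivity
    have hpq0 : 0 ≤ p * q := mul_nonneg (Real.sqrt_nonneg _) (Real.sqrt_nonneg _)
    refine le_of_pow_le_pow_left₀ (two_ne_zero) hpq0 ?_
    rw [mul_pow]
    nlinarith [sq_nonneg (‖u‖ * ‖S (x : H)‖ - ‖v‖ * ‖adjoint S (x : H)‖), hp2, hq2,
      norm_nonneg u, norm_nonneg v, norm_nonneg (S (x : H)), norm_nonneg (adjoint S (x : H))]
  refine habs1.trans (hcs.trans ?_)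
  have hsq1 : Real.sqrt (‖u‖ ^ 2 + ‖v‖ ^ 2) ≤ Real.sqrt β := Real.sqrt_le_sqrt ha
  have hsq2 : Real.sqrt (‖S (x : H)‖ ^ 2 + ‖adjoint S (x : H)‖ ^ 2)
      ≤ 2 * Real.sin θ * Real.sqrt γ := by
    refine (Real.sqrt_le_sqrt (hb x)).trans_eq ?_
    rw [show (4 : ℝ) * Real.sin θ ^ 2 * γ = (2 * Real.sin θ) ^ 2 * γ by ring,
      Real.sqrt_mul (by positivity), Real.sqrt_sq (by positivity)]
  calc Real.sqrt (‖u‖ ^ 2 + ‖v‖ ^ 2) * Real.sqrt (‖S (x:H)‖ ^ 2 + ‖adjoint S (x:H)‖ ^ 2)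
      ≤ Real.sqrt β * (2 * Real.sin θ * Real.sqrt γ) :=
        mul_le_mul hsq1 hsq2 (Real.sqrt_nonneg _) (Real.sqrt_nonneg _)
    _ = 2 * Real.sin θ * Real.sqrt β * Real.sqrt γ := by ring
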